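/- Suppose R_M ⫫ (M, R_Y) | (X, A, Y) and R_Y ⫫ (Y, R_M) | (X, A, M). Then P(R_M = 1, R_Y = 1 | X, A, M, Y) = P(R_M = 1 | X, A, Y, R_Y = 1) · P(R_Y = 1 | X, A, M, R_M = 1), for all values making the conditioning events positive. -/
import Mathlib


open scoped Classical

noncomputable def Pr {Ω : Type*} [Fintype Ω] (p : Ω → ℝ) (E : Ω → Prop) : ℝ :=
  ∑ ω, if E ω then p ω else 0

noncomputable def cPr {Ω : Type*} [Fintype Ω] (p : Ω → ℝ) (E F : Ω → Prop) : ℝ :=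
  Pr p (fun ω => E ω ∧ F ω) / Pr p F

noncomputable def odds {Ω : Type*} [Fintype Ω] (p : Ω → ℝ) (E F : Ω → Prop) : ℝ :=
  cPr p E F / cPr p (fun ω => ¬ E ω) F


section
variable {Ω : Type*} [Fintype Ω] (p : Ω → ℝ)

lemma Pr_nonneg (hp : ∀ ω, 0 ≤ p ω) (E : Ω → Prop) : 0 ≤ Pr p E :=
  Finset.sum_nonneg fun ω _ => by by_cases h : E ω <;> simp [Pr, h, hp ω]

lemma Pr_congr {E F : Ω → Prop} (h : ∀ ω, E ω ↔ F ω) : Pr p E = Pr p F :=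
  Finset.sum_congr rfl fun ω _ => by simp [h ω]

lemma Pr_mono (hp : ∀ ω, 0 ≤ p ω) {E F : Ω → Prop} (h : ∀ ω, E ω → F ω) :
    Pr p E ≤ Pr p F := by
  refine Finset.sum_le_sum fun ω _ => ?_
  by_cases hE : E ω
  · simp [hE, h ω hE]
  · simp only [hE, if_false]
    by_cases hF : F ω <;> simp [hF, hp ω]

lemma Pr_fiber {β : Type*} (E : Ω → Prop) (f : Ω → β) :
    Pr p E = ∑ b ∈ Finset.image f Finset.univ, Pr p (fun ω => E ω ∧ f ω = b) := by
  unfold Pr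
  rw [Finset.sum_comm]
  refine Finset.sum_congr rfl fun ω _ => ?_
  by_cases hE : E ω
  · simp [hE, Finset.sum_ite_eq, Finset.mem_image]
  · simp [hE]

lemma cPr_mul {E F : Ω → Prop} (h : Pr p F ≠ 0) :
    Pr p (fun ω => E ω ∧ F ω) = cPr p E F * Pr p F := by
  unfold cPr; field_simp

lemma Pr_key {β : Type*} (hp : ∀ ω, 0 ≤ p ω) (E G : Ω → Prop) (f : Ω → β) (c : ℝ)
    (h : ∀ b, 0 < Pr p (fun ω => G ω ∧ f ω = b) →
      Pr p (fun ω => (E ω ∧ G ω) ∧ f ω = b) = c * Pr p (fun ω => G ω ∧ f ω = b)) :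
    Pr p (fun ω => E ω ∧ G ω) = c * Pr p G := by
  rw [Pr_fiber p (fun ω => E ω ∧ G ω) f, Pr_fiber p G f, Finset.mul_sum]
  refine Finset.sum_congr rfl fun b _ => ?_
  rcases lt_or_eq_of_le (Pr_nonneg p hp (fun ω => G ω ∧ f ω = b)) with hpos | hzero
  · exact h b hpos
  · have hle : Pr p (fun ω => (E ω ∧ G ω) ∧ f ω = b) ≤ Pr p (fun ω => G ω ∧ f ω = b) :=
      Pr_mono p hp fun ω hω => ⟨hω.1.2, hω.2⟩
    rw [← hzero] at hle
    rw [le_antisymm hle (Pr_nonneg p hp _), ← hzero, mul_zero]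

end

/-- Factorization underlying identification in Model S4. -/
theorem S4_factorization
    {Ω 𝒳 𝒜 ℳ 𝒴 : Type*} [Fintype Ω]
    (p : Ω → ℝ) (hp : ∀ ω, 0 ≤ p ω) (hsum : ∑ ω, p ω = 1)
    (X : Ω → 𝒳) (A : Ω → 𝒜) (M : Ω → ℳ) (Y : Ω → 𝒴) (RM RY : Ω → ℕ)
    (hRM : ∀ ω, RM ω = 0 ∨ RM ω = 1) (hRY : ∀ ω, RY ω = 0 ∨ RY ω = 1)
    -- R_M ⫫ (M, R_Y) ∣ (X, A, Y)
    (h1 : ∀ (rm : ℕ) (m : ℳ) (ry : ℕ) (x : 𝒳) (a : 𝒜) (y : 𝒴),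
      0 < Pr p (fun ω => M ω = m ∧ RY ω = ry ∧ X ω = x ∧ A ω = a ∧ Y ω = y) →
      cPr p (fun ω => RM ω = rm)
          (fun ω => M ω = m ∧ RY ω = ry ∧ X ω = x ∧ A ω = a ∧ Y ω = y)
        = cPr p (fun ω => RM ω = rm) (fun ω => X ω = x ∧ A ω = a ∧ Y ω = y))
    -- R_Y ⫫ (Y, R_M) ∣ (X, A, M)
    (h2 : ∀ (ry : ℕ) (y : 𝒴) (rm : ℕ) (x : 𝒳) (a : 𝒜) (m : ℳ),
      0 < Pr p (fun ω => Y ω = y ∧ RM ω = rm ∧ X ω = x ∧ A ω = a ∧ M ω = m) →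
      cPr p (fun ω => RY ω = ry)
          (fun ω => Y ω = y ∧ RM ω = rm ∧ X ω = x ∧ A ω = a ∧ M ω = m)
        = cPr p (fun ω => RY ω = ry) (fun ω => X ω = x ∧ A ω = a ∧ M ω = m)) :
    ∀ (x : 𝒳) (a : 𝒜) (m : ℳ) (y : 𝒴),
      0 < Pr p (fun ω => X ω = x ∧ A ω = a ∧ M ω = m ∧ Y ω = y) →
      0 < Pr p (fun ω => X ω = x ∧ A ω = a ∧ Y ω = y ∧ RY ω = 1) →
      0 < Pr p (fun ω => X ω = x ∧ A ω = a ∧ M ω = m ∧ RM ω = 1) →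
      0 < Pr p (fun ω => X ω = x ∧ A ω = a ∧ M ω = m ∧ Y ω = y ∧ RM ω = 1) →
      cPr p (fun ω => RM ω = 1 ∧ RY ω = 1) (fun ω => X ω = x ∧ A ω = a ∧ M ω = m ∧ Y ω = y)
        = cPr p (fun ω => RM ω = 1) (fun ω => X ω = x ∧ A ω = a ∧ Y ω = y ∧ RY ω = 1)
          * cPr p (fun ω => RY ω = 1) (fun ω => X ω = x ∧ A ω = a ∧ M ω = m ∧ RM ω = 1) := by
  intro x a m y hXAMY hXAYRY hXAMRM hXAMYRM
  -- abbreviations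
  set c1 := cPr p (fun ω => RM ω = 1) (fun ω => X ω = x ∧ A ω = a ∧ Y ω = y) with hc1
  set c2 := cPr p (fun ω => RY ω = 1) (fun ω => X ω = x ∧ A ω = a ∧ M ω = m) with hc2
  -- Step A : P(RM=1 ∧ RY=1 ∧ X ∧ A ∧ Y) = c1 * P(RY=1 ∧ X ∧ A ∧ Y)
  have hA : Pr p (fun ω => RM ω = 1 ∧ (RY ω = 1 ∧ X ω = x ∧ A ω = a ∧ Y ω = y))
      = c1 * Pr p (fun ω => RY ω = 1 ∧ X ω = x ∧ A ω = a ∧ Y ω = y) := by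
    refine Pr_key p hp _ _ M c1 fun b hb => ?_
    have hb' : 0 < Pr p (fun ω => M ω = b ∧ RY ω = 1 ∧ X ω = x ∧ A ω = a ∧ Y ω = y) := by
      rw [Pr_congr p (F := fun ω => (RY ω = 1 ∧ X ω = x ∧ A ω = a ∧ Y ω = y) ∧ M ω = b)
        (fun ω => by tauto)]
      exact hb
    have heq := h1 1 b 1 x a y hb'
    have hmul := cPr_mul p (E := fun ω => RM ω = 1)
      (F := fun ω => M ω = b ∧ RY ω = 1 ∧ X ω = x ∧ A ω = a ∧ Y ω = y) (ne_of_gt hb')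
    rw [heq] at hmul
    calc Pr p (fun ω => (RM ω = 1 ∧ (RY ω = 1 ∧ X ω = x ∧ A ω = a ∧ Y ω = y)) ∧ M ω = b)
        = Pr p (fun ω => RM ω = 1 ∧ M ω = b ∧ RY ω = 1 ∧ X ω = x ∧ A ω = a ∧ Y ω = y) :=
          Pr_congr p fun ω => by tauto
      _ = c1 * Pr p (fun ω => M ω = b ∧ RY ω = 1 ∧ X ω = x ∧ A ω = a ∧ Y ω = y) := hmul
      _ = c1 * Pr p (fun ω => (RY ω = 1 ∧ X ω = x ∧ A ω = a ∧ Y ω = y) ∧ M ω = b) := by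
          rw [Pr_congr p (E := fun ω => M ω = b ∧ RY ω = 1 ∧ X ω = x ∧ A ω = a ∧ Y ω = y)
            (F := fun ω => (RY ω = 1 ∧ X ω = x ∧ A ω = a ∧ Y ω = y) ∧ M ω = b)
            (fun ω => by tauto)]
  -- Step B : P(RY=1 ∧ RM=1 ∧ X ∧ A ∧ M) = c2 * P(RM=1 ∧ X ∧ A ∧ M)
  have hB : Pr p (fun ω => RY ω = 1 ∧ (RM ω = 1 ∧ X ω = x ∧ A ω = a ∧ M ω = m))
      = c2 * Pr p (fun ω => RM ω = 1 ∧ X ω = x ∧ A ω = a ∧ M ω = m) := by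
    refine Pr_key p hp _ _ Y c2 fun b hb => ?_
    have hb' : 0 < Pr p (fun ω => Y ω = b ∧ RM ω = 1 ∧ X ω = x ∧ A ω = a ∧ M ω = m) := by
      rw [Pr_congr p (F := fun ω => (RM ω = 1 ∧ X ω = x ∧ A ω = a ∧ M ω = m) ∧ Y ω = b)
        (fun ω => by tauto)]
      exact hb
    have heq := h2 1 b 1 x a m hb'
    have hmul := cPr_mul p (E := fun ω => RY ω = 1)
      (F := fun ω => Y ω = b ∧ RM ω = 1 ∧ X ω = x ∧ A ω = a ∧ M ω = m) (ne_of_gt hb')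
    rw [heq] at hmul
    calc Pr p (fun ω => (RY ω = 1 ∧ (RM ω = 1 ∧ X ω = x ∧ A ω = a ∧ M ω = m)) ∧ Y ω = b)
        = Pr p (fun ω => RY ω = 1 ∧ Y ω = b ∧ RM ω = 1 ∧ X ω = x ∧ A ω = a ∧ M ω = m) :=
          Pr_congr p fun ω => by tauto
      _ = c2 * Pr p (fun ω => Y ω = b ∧ RM ω = 1 ∧ X ω = x ∧ A ω = a ∧ M ω = m) := hmul
      _ = c2 * Pr p (fun ω => (RM ω = 1 ∧ X ω = x ∧ A ω = a ∧ M ω = m) ∧ Y ω = b) := by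
          rw [Pr_congr p (E := fun ω => Y ω = b ∧ RM ω = 1 ∧ X ω = x ∧ A ω = a ∧ M ω = m)
            (F := fun ω => (RM ω = 1 ∧ X ω = x ∧ A ω = a ∧ M ω = m) ∧ Y ω = b)
            (fun ω => by tauto)]
  -- Step C2 : P(RY=1 ∧ X ∧ A ∧ M ∧ Y) = c2 * P(X ∧ A ∧ M ∧ Y)
  have hC2 : Pr p (fun ω => RY ω = 1 ∧ (X ω = x ∧ A ω = a ∧ M ω = m ∧ Y ω = y))
      = c2 * Pr p (fun ω => X ω = x ∧ A ω = a ∧ M ω = m ∧ Y ω = y) := by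
    refine Pr_key p hp _ _ RM c2 fun b hb => ?_
    have hb' : 0 < Pr p (fun ω => Y ω = y ∧ RM ω = b ∧ X ω = x ∧ A ω = a ∧ M ω = m) := by
      rw [Pr_congr p (F := fun ω => (X ω = x ∧ A ω = a ∧ M ω = m ∧ Y ω = y) ∧ RM ω = b)
        (fun ω => by tauto)]
      exact hb
    have heq := h2 1 y b x a m hb'
    have hmul := cPr_mul p (E := fun ω => RY ω = 1)
      (F := fun ω => Y ω = y ∧ RM ω = b ∧ X ω = x ∧ A ω = a ∧ M ω = m) (ne_of_gt hb')
    rw [heq] at hmul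
    calc Pr p (fun ω => (RY ω = 1 ∧ (X ω = x ∧ A ω = a ∧ M ω = m ∧ Y ω = y)) ∧ RM ω = b)
        = Pr p (fun ω => RY ω = 1 ∧ Y ω = y ∧ RM ω = b ∧ X ω = x ∧ A ω = a ∧ M ω = m) :=
          Pr_congr p fun ω => by tauto
      _ = c2 * Pr p (fun ω => Y ω = y ∧ RM ω = b ∧ X ω = x ∧ A ω = a ∧ M ω = m) := hmul
      _ = c2 * Pr p (fun ω => (X ω = x ∧ A ω = a ∧ M ω = m ∧ Y ω = y) ∧ RM ω = b) := by
          rw [Pr_congr p (E := fun ω => Y ω = y ∧ RM ω = b ∧ X ω = x ∧ A ω = a ∧ M ω = m)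
            (F := fun ω => (X ω = x ∧ A ω = a ∧ M ω = m ∧ Y ω = y) ∧ RM ω = b)
            (fun ω => by tauto)]
  -- Step C : P((RM=1 ∧ RY=1) ∧ X ∧ A ∧ M ∧ Y) = c1 * c2 * P(X ∧ A ∧ M ∧ Y)
  have hC : Pr p (fun ω => (RM ω = 1 ∧ RY ω = 1) ∧ (X ω = x ∧ A ω = a ∧ M ω = m ∧ Y ω = y))
      = c1 * (c2 * Pr p (fun ω => X ω = x ∧ A ω = a ∧ M ω = m ∧ Y ω = y)) := by
    have hD : Pr p (fun ω => RY ω = 1 ∧ (X ω = x ∧ A ω = a ∧ M ω = m ∧ Y ω = y))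
        = Pr p (fun ω => M ω = m ∧ RY ω = 1 ∧ X ω = x ∧ A ω = a ∧ Y ω = y) :=
      Pr_congr p fun ω => by tauto
    rcases lt_or_eq_of_le (Pr_nonneg p hp
        (fun ω => M ω = m ∧ RY ω = 1 ∧ X ω = x ∧ A ω = a ∧ Y ω = y)) with hpos | hzero
    · have heq := h1 1 m 1 x a y hpos
      have hmul := cPr_mul p (E := fun ω => RM ω = 1)
        (F := fun ω => M ω = m ∧ RY ω = 1 ∧ X ω = x ∧ A ω = a ∧ Y ω = y) (ne_of_gt hpos)
      rw [heq] at hmul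
      calc Pr p (fun ω => (RM ω = 1 ∧ RY ω = 1) ∧ (X ω = x ∧ A ω = a ∧ M ω = m ∧ Y ω = y))
          = Pr p (fun ω => RM ω = 1 ∧ M ω = m ∧ RY ω = 1 ∧ X ω = x ∧ A ω = a ∧ Y ω = y) :=
            Pr_congr p fun ω => by tauto
        _ = c1 * Pr p (fun ω => M ω = m ∧ RY ω = 1 ∧ X ω = x ∧ A ω = a ∧ Y ω = y) := hmul
        _ = c1 * Pr p (fun ω => RY ω = 1 ∧ (X ω = x ∧ A ω = a ∧ M ω = m ∧ Y ω = y)) := by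
            rw [hD]
        _ = c1 * (c2 * Pr p (fun ω => X ω = x ∧ A ω = a ∧ M ω = m ∧ Y ω = y)) := by
            rw [hC2]
    · have hle : Pr p (fun ω => (RM ω = 1 ∧ RY ω = 1) ∧ (X ω = x ∧ A ω = a ∧ M ω = m ∧ Y ω = y))
          ≤ Pr p (fun ω => M ω = m ∧ RY ω = 1 ∧ X ω = x ∧ A ω = a ∧ Y ω = y) :=
        Pr_mono p hp fun ω hω => by tauto
      rw [← hzero] at hle
      have h0 := le_antisymm hle (Pr_nonneg p hp _)
      rw [h0]
      have : c2 * Pr p (fun ω => X ω = x ∧ A ω = a ∧ M ω = m ∧ Y ω = y) = 0 := by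
        rw [← hC2, hD, ← hzero]
      rw [this, mul_zero]
  -- assemble
  have hApos : Pr p (fun ω => RY ω = 1 ∧ X ω = x ∧ A ω = a ∧ Y ω = y) > 0 := by
    rw [Pr_congr p (F := fun ω => X ω = x ∧ A ω = a ∧ Y ω = y ∧ RY ω = 1) (fun ω => by tauto)]
    exact hXAYRY
  have hBpos : Pr p (fun ω => RM ω = 1 ∧ X ω = x ∧ A ω = a ∧ M ω = m) > 0 := by
    rw [Pr_congr p (F := fun ω => X ω = x ∧ A ω = a ∧ M ω = m ∧ RM ω = 1) (fun ω => by tauto)]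
    exact hXAMRM
  have rhs1 : cPr p (fun ω => RM ω = 1) (fun ω => X ω = x ∧ A ω = a ∧ Y ω = y ∧ RY ω = 1)
      = c1 := by
    unfold cPr
    rw [Pr_congr p (E := fun ω => RM ω = 1 ∧ X ω = x ∧ A ω = a ∧ Y ω = y ∧ RY ω = 1)
      (F := fun ω => RM ω = 1 ∧ (RY ω = 1 ∧ X ω = x ∧ A ω = a ∧ Y ω = y)) (fun ω => by tauto),
      Pr_congr p (E := fun ω => X ω = x ∧ A ω = a ∧ Y ω = y ∧ RY ω = 1)
      (F := fun ω => RY ω = 1 ∧ X ω = x ∧ A ω = a ∧ Y ω = y) (fun ω => by tauto),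
      hA, mul_div_assoc, div_self (ne_of_gt hApos), mul_one]
  have rhs2 : cPr p (fun ω => RY ω = 1) (fun ω => X ω = x ∧ A ω = a ∧ M ω = m ∧ RM ω = 1)
      = c2 := by
    unfold cPr
    rw [Pr_congr p (E := fun ω => RY ω = 1 ∧ X ω = x ∧ A ω = a ∧ M ω = m ∧ RM ω = 1)
      (F := fun ω => RY ω = 1 ∧ (RM ω = 1 ∧ X ω = x ∧ A ω = a ∧ M ω = m)) (fun ω => by tauto),
      Pr_congr p (E := fun ω => X ω = x ∧ A ω = a ∧ M ω = m ∧ RM ω = 1)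
      (F := fun ω => RM ω = 1 ∧ X ω = x ∧ A ω = a ∧ M ω = m) (fun ω => by tauto),
      hB, mul_div_assoc, div_self (ne_of_gt hBpos), mul_one]
  rw [rhs1, rhs2]
  unfold cPr
  rw [hC, ← mul_assoc, mul_div_assoc, div_self (ne_of_gt hXAMY), mul_one]
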